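/- arXiv:2008.07575 — 7 statements merged into one kernel-verified Lean document; each statement's English description precedes it below -/
import Mathlib

section
/- In the abstract LOD setting with the approximation properties, let f ∈ H, let u ∈ H satisfy a(u,v) = ⟨f,v⟩ for all v ∈ H, and let u_LOD ∈ V_LOD satisfy a(u_LOD, v) = a(u, v) for all v ∈ V_LOD together with u − u_LOD ∈ W. Then the third-order H¹-error estimate ‖u − u_LOD‖₁ ≤ (C₁ C₂ / α) · H³ holds. -/
/-!
The error `e = u - u_LOD` lies in `W = ker P`, so `a(u_LOD, e) = 0` and
`a(e, e) = ⟨f, e⟩ = ⟨f - P f, e⟩`, the last step because `⟨P f, e⟩ = ⟨f, P e⟩ = 0`.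
Coercivity and Cauchy–Schwarz then give `α ‖e‖₁² ≤ ‖f - P f‖ ‖e‖`, and since `P e = 0`
the approximation property bounds `‖e‖ = ‖e - P e‖ ≤ C₁ H ‖e‖₁`; together with
`‖f - P f‖ ≤ C₂ H²` this yields `α ‖e‖₁² ≤ C₁ C₂ H³ ‖e‖₁`.
-/

open scoped ComplexConjugate

section LinearLeft

variable {H : Type*} [AddCommGroup H] [Module ℂ H]

theorem sub_left_of_linear_left {b : H → H → ℂ}
    (add_left : ∀ x y z : H, b (x + y) z = b x z + b y z)
    (smul_left : ∀ (c : ℂ) (x y : H), b (c • x) y = c * b x y) (x y z : H) :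
    b (x - y) z = b x z - b y z :=
  map_sub (IsLinearMap.mk' (b · z) ⟨fun x y => add_left x y z, fun c x => smul_left c x z⟩) x y

theorem zero_right_of_linear_left {inn : H → H → ℂ}
    (smul_left : ∀ (c : ℂ) (x y : H), inn (c • x) y = c * inn x y)
    (conj_symm : ∀ x y : H, inn y x = conj (inn x y)) (x : H) : inn x 0 = 0 := by
  rw [conj_symm, ← zero_smul ℂ (0 : H), smul_left, zero_mul, map_zero]

theorem norm_le_sqrt_mul_sqrt_of_linear_left {inn : H → H → ℂ}
    (add_left : ∀ x y z : H, inn (x + y) z = inn x z + inn y z)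
    (smul_left : ∀ (c : ℂ) (x y : H), inn (c • x) y = c * inn x y)
    (conj_symm : ∀ x y : H, inn y x = conj (inn x y))
    (re_nonneg : ∀ x : H, 0 ≤ (inn x x).re) (x y : H) :
    ‖inn x y‖ ≤ √(inn x x).re * √(inn y y).re := by
  -- Mathlib's inner products are conjugate-linear in the first argument, hence the swap.
  let _ : PreInnerProductSpace.Core ℂ H :=
    { inner := fun x y => inn y x
      conj_inner_symm := fun x y => (conj_symm x y).symm
      re_inner_nonneg := re_nonneg
      add_left := fun x y z => by simp only [conj_symm _ z, add_left, map_add]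
      smul_left := fun x y c => by simp only [conj_symm _ y, smul_left, map_mul] }
  exact (InnerProductSpace.Core.norm_inner_le_norm (𝕜 := ℂ) y x).trans_eq (mul_comm _ _)

theorem form_sub_eq_inner_sub_proj_of_proj_eq_zero {inn a : H → H → ℂ} {P : H → H}
    (inn_add_left : ∀ x y z : H, inn (x + y) z = inn x z + inn y z)
    (inn_smul_left : ∀ (c : ℂ) (x y : H), inn (c • x) y = c * inn x y)
    (inn_conj_symm : ∀ x y : H, inn y x = conj (inn x y))
    (a_add_left : ∀ x y z : H, a (x + y) z = a x z + a y z)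
    (a_smul_left : ∀ (c : ℂ) (x y : H), a (c • x) y = c * a x y)
    (P_selfadjoint : ∀ x y : H, inn (P x) y = inn x (P y))
    {f u w e : H} (hu : a u e = inn f e) (hw : a w e = 0) (he : P e = 0) :
    a (u - w) e = inn (f - P f) e := by
  rw [sub_left_of_linear_left a_add_left a_smul_left, hu, hw,
    sub_left_of_linear_left inn_add_left inn_smul_left, P_selfadjoint, he,
    zero_right_of_linear_left inn_smul_left inn_conj_symm]

end LinearLeft

theorem le_div_of_mul_sq_le_mul {α K x : ℝ} (hα : 0 < α) (hK : 0 ≤ K) (hx : 0 ≤ x)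
    (h : α * x ^ 2 ≤ K * x) : x ≤ K / α := by
  rw [le_div_iff₀ hα]
  rcases hx.eq_or_lt with rfl | hx
  · simpa using hK
  · nlinarith

theorem lod_H1_error_estimate_general
    {H : Type*} [NormedAddCommGroup H] [InnerProductSpace ℂ H]
    (inn : H → H → ℂ)
    (inn_add_left : ∀ x y z : H, inn (x + y) z = inn x z + inn y z)
    (inn_smul_left : ∀ (c : ℂ) (x y : H), inn (c • x) y = c * inn x y)
    (inn_conj_symm : ∀ x y : H, inn y x = conj (inn x y))
    (inn_nonneg : ∀ x : H, 0 ≤ (inn x x).re)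
    (nl2 : H → ℝ) (hnl2 : ∀ v : H, nl2 v = Real.sqrt (inn v v).re)
    (a : H → H → ℂ)
    (a_add_left : ∀ x y z : H, a (x + y) z = a x z + a y z)
    (a_smul_left : ∀ (c : ℂ) (x y : H), a (c • x) y = c * a x y)
    (α : ℝ) (hα : 0 < α) (a_coercive : ∀ v : H, α * ‖v‖ ^ 2 ≤ (a v v).re)
    (P : H →L[ℂ] H)
    (P_selfadjoint : ∀ x y : H, inn (P x) y = inn x (P y))
    -- approximation properties of P (mesh size Hm) and of the datum f
    (Hm C₁ C₂ : ℝ) (hHm : 0 < Hm) (hC₁ : 0 < C₁) (hC₂ : 0 < C₂)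
    (f u uLOD : H)
    (P_approx : ∀ v : H, nl2 (v - P v) ≤ C₁ * Hm * ‖v‖)
    (f_approx : nl2 (f - P f) ≤ C₂ * Hm ^ 2)
    -- u solves the variational problem, uLOD is its Ritz projection in V_LOD
    (hu : ∀ v : H, a u v = inn f v)
    (huLOD_mem : ∀ w : H, P w = 0 → a uLOD w = 0)
    (herr_W : P (u - uLOD) = 0) :
    ‖u - uLOD‖ ≤ (C₁ * C₂ / α) * Hm ^ 3 := by
  set e := u - uLOD
  have nl2_nonneg : ∀ v : H, 0 ≤ nl2 v := fun v => by rw [hnl2]; positivity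
  have h_energy : a e e = inn (f - P f) e :=
    form_sub_eq_inner_sub_proj_of_proj_eq_zero inn_add_left inn_smul_left inn_conj_symm
      a_add_left a_smul_left P_selfadjoint (hu e) (huLOD_mem e herr_W) herr_W
  have h_cs : ‖inn (f - P f) e‖ ≤ nl2 (f - P f) * nl2 e := by
    simpa only [hnl2] using norm_le_sqrt_mul_sqrt_of_linear_left inn_add_left inn_smul_left
      inn_conj_symm inn_nonneg (f - P f) e
  have h_e : nl2 e ≤ C₁ * Hm * ‖e‖ := by simpa [herr_W] using P_approx e
  have key : α * ‖e‖ ^ 2 ≤ C₁ * C₂ * Hm ^ 3 * ‖e‖ :=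
    calc α * ‖e‖ ^ 2 ≤ (a e e).re := a_coercive e
      _ = (inn (f - P f) e).re := by rw [h_energy]
      _ ≤ ‖inn (f - P f) e‖ := Complex.re_le_norm _
      _ ≤ nl2 (f - P f) * nl2 e := h_cs
      _ ≤ C₂ * Hm ^ 2 * (C₁ * Hm * ‖e‖) :=
        mul_le_mul f_approx h_e (nl2_nonneg e) (by positivity)
      _ = C₁ * C₂ * Hm ^ 3 * ‖e‖ := by ring
  rw [div_mul_eq_mul_div]
  exact le_div_of_mul_sq_le_mul hα (by positivity) (norm_nonneg e) key

/-- Third-order H¹-error estimate for the ideal LOD approximation: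
`‖u − u_LOD‖₁ ≤ (C₁ C₂ / α) · H³`. -/
theorem lod_H1_error_estimate
    {H : Type*} [NormedAddCommGroup H] [InnerProductSpace ℂ H] [CompleteSpace H]
    (inn : H → H → ℂ)
    (inn_add_left : ∀ x y z : H, inn (x + y) z = inn x z + inn y z)
    (inn_smul_left : ∀ (c : ℂ) (x y : H), inn (c • x) y = c * inn x y)
    (inn_conj_symm : ∀ x y : H, inn y x = conj (inn x y))
    (inn_nonneg : ∀ x : H, 0 ≤ (inn x x).re)
    (inn_definite : ∀ x : H, inn x x = 0 → x = 0)
    (nl2 : H → ℝ) (hnl2 : ∀ v : H, nl2 v = Real.sqrt (inn v v).re)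
    (CF : ℝ) (hCF : 0 < CF) (hFriedrichs : ∀ v : H, nl2 v ≤ CF * ‖v‖)
    (a : H → H → ℂ)
    (a_add_left : ∀ x y z : H, a (x + y) z = a x z + a y z)
    (a_smul_left : ∀ (c : ℂ) (x y : H), a (c • x) y = c * a x y)
    (a_hermitian : ∀ x y : H, a y x = conj (a x y))
    (Ca : ℝ) (a_bounded : ∀ v w : H, ‖a v w‖ ≤ Ca * ‖v‖ * ‖w‖)
    (α : ℝ) (hα : 0 < α) (a_coercive : ∀ v : H, α * ‖v‖ ^ 2 ≤ (a v v).re)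
    (P : H →L[ℂ] H)
    (P_idem : ∀ x : H, P (P x) = P x)
    (P_finite : FiniteDimensional ℂ (LinearMap.range (P : H →ₗ[ℂ] H)))
    (P_selfadjoint : ∀ x y : H, inn (P x) y = inn x (P y))
    -- approximation properties of P (mesh size Hm) and of the datum f
    (Hm C₁ C₂ : ℝ) (hHm : 0 < Hm) (hC₁ : 0 < C₁) (hC₂ : 0 < C₂)
    (f u uLOD : H)
    (P_approx : ∀ v : H, nl2 (v - P v) ≤ C₁ * Hm * ‖v‖)
    (f_approx : nl2 (f - P f) ≤ C₂ * Hm ^ 2)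
    -- u solves the variational problem, uLOD is its Ritz projection in V_LOD
    (hu : ∀ v : H, a u v = inn f v)
    (huLOD_mem : ∀ w : H, P w = 0 → a uLOD w = 0)
    (huLOD_galerkin : ∀ v : H, (∀ w : H, P w = 0 → a v w = 0) → a uLOD v = a u v)
    (herr_W : P (u - uLOD) = 0) :
    ‖u - uLOD‖ ≤ (C₁ * C₂ / α) * Hm ^ 3 :=
  lod_H1_error_estimate_general inn inn_add_left inn_smul_left inn_conj_symm inn_nonneg nl2 hnl2 a
    a_add_left a_smul_left α hα a_coercive P P_selfadjoint Hm C₁ C₂ hHm hC₁ hC₂ f u uLOD P_approx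
    f_approx hu huLOD_mem herr_W
end

section
/- In the abstract LOD setting with the approximation properties, let f ∈ H, let u ∈ H satisfy a(u,v) = ⟨f,v⟩ for all v ∈ H, and let u_LOD ∈ V_LOD satisfy a(u_LOD, v) = a(u, v) for all v ∈ V_LOD together with u − u_LOD ∈ W. Then the fourth-order L²-error estimate ‖u − u_LOD‖ ≤ (C₁² C₂ / α) · H⁴ holds. -/
/-!
The error `e = u - u_LOD` lies in `W = ker P`, so `a(u_LOD, e) = 0` and, `P` being
`⟨·,·⟩`-self-adjoint, `⟨P f, e⟩ = ⟨f, P e⟩ = 0`; hence `a(e, e) = ⟨f - P f, e⟩`. Coercivity and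
Cauchy–Schwarz give `α ‖e‖₁² ≤ ‖f - P f‖ ‖e‖ ≤ C₂ H² ‖e‖`, while `e = e - P e` gives
`‖e‖ ≤ C₁ H ‖e‖₁`. Squaring the latter and combining, `‖e‖² ≤ (C₁² C₂ H⁴ / α) ‖e‖`.
-/

open scoped ComplexConjugate

section LinearLeft

open RCLike

variable {𝕜 E : Type*} [RCLike 𝕜] [AddCommGroup E] [Module 𝕜 E]

/-- Mathlib's pre-inner products are conjugate-linear in the first argument, hence the swap. -/
abbrev PreInnerProductSpace.Core.ofLinearLeft (inn : E → E → 𝕜)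
    (add_left : ∀ x y z : E, inn (x + y) z = inn x z + inn y z)
    (smul_left : ∀ (c : 𝕜) (x y : E), inn (c • x) y = c * inn x y)
    (conj_symm : ∀ x y : E, inn y x = conj (inn x y))
    (re_nonneg : ∀ x : E, 0 ≤ re (inn x x)) :
    PreInnerProductSpace.Core 𝕜 E where
  inner x y := inn y x
  conj_inner_symm x y := by simp [conj_symm x y]
  re_inner_nonneg := re_nonneg
  add_left x y z := by rw [conj_symm, add_left, map_add, ← conj_symm, ← conj_symm]
  smul_left x y c := by rw [conj_symm, smul_left, map_mul, ← conj_symm]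

theorem norm_le_sqrt_re_mul_sqrt_re_of_linear_left (inn : E → E → 𝕜)
    (add_left : ∀ x y z : E, inn (x + y) z = inn x z + inn y z)
    (smul_left : ∀ (c : 𝕜) (x y : E), inn (c • x) y = c * inn x y)
    (conj_symm : ∀ x y : E, inn y x = conj (inn x y))
    (re_nonneg : ∀ x : E, 0 ≤ re (inn x x)) (x y : E) :
    ‖inn x y‖ ≤ √(re (inn x x)) * √(re (inn y y)) := by
  rw [mul_comm]
  exact InnerProductSpace.Core.norm_inner_le_norm
    (c := .ofLinearLeft inn add_left smul_left conj_symm re_nonneg) y x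

end LinearLeft

theorem form_self_sub_eq_inner_sub_of_mem_ker {R E : Type*} [CommRing R] [StarRing R]
    [AddCommGroup E] (a inn : E → E → R)
    (a_add_left : ∀ x y z : E, a (x + y) z = a x z + a y z)
    (inn_add_left : ∀ x y z : E, inn (x + y) z = inn x z + inn y z)
    (inn_conj_symm : ∀ x y : E, inn y x = conj (inn x y))
    (P : E → E) (P_symm : ∀ x y : E, inn (P x) y = inn x (P y))
    {f u v : E} (hu : ∀ w : E, a u w = inn f w) (hv : ∀ w : E, P w = 0 → a v w = 0)
    (huv : P (u - v) = 0) :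
    a (u - v) (u - v) = inn (f - P f) (u - v) := by
  have a_sub_left := map_sub (AddMonoidHom.mk' (a · (u - v)) (a_add_left · · (u - v))) u v
  have inn_sub_left :=
    map_sub (AddMonoidHom.mk' (inn · (u - v)) (inn_add_left · · (u - v))) f (P f)
  have inn_zero_left := map_zero (AddMonoidHom.mk' (inn · f) (inn_add_left · · f))
  simp only [AddMonoidHom.mk'_apply] at a_sub_left inn_sub_left inn_zero_left
  rw [a_sub_left, inn_sub_left, hu, hv _ huv, P_symm, huv, inn_conj_symm 0 f, inn_zero_left,
    map_zero]

theorem le_sq_mul_div_of_le_mul_of_mul_sq_le {x y b c α : ℝ} (hα : 0 < α) (hc : 0 ≤ c)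
    (hx : 0 ≤ x) (hxy : x ≤ b * y) (hy : α * y ^ 2 ≤ c * x) :
    x ≤ b ^ 2 * c / α := by
  rw [le_div_iff₀ hα]
  rcases hx.eq_or_lt with rfl | hx
  · rw [zero_mul]
    positivity
  refine le_of_mul_le_mul_right ?_ hx
  calc x * α * x = α * x ^ 2 := by ring
    _ ≤ α * (b * y) ^ 2 := by gcongr
    _ = b ^ 2 * (α * y ^ 2) := by ring
    _ ≤ b ^ 2 * (c * x) := by gcongr
    _ = b ^ 2 * c * x := by ring

theorem lod_L2_error_estimate_general
    {H : Type*} [NormedAddCommGroup H] [InnerProductSpace ℂ H]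
    (inn : H → H → ℂ)
    (inn_add_left : ∀ x y z : H, inn (x + y) z = inn x z + inn y z)
    (inn_smul_left : ∀ (c : ℂ) (x y : H), inn (c • x) y = c * inn x y)
    (inn_conj_symm : ∀ x y : H, inn y x = conj (inn x y))
    (inn_nonneg : ∀ x : H, 0 ≤ (inn x x).re)
    (nl2 : H → ℝ) (hnl2 : ∀ v : H, nl2 v = Real.sqrt (inn v v).re)
    (a : H → H → ℂ)
    (a_add_left : ∀ x y z : H, a (x + y) z = a x z + a y z)
    (α : ℝ) (hα : 0 < α) (a_coercive : ∀ v : H, α * ‖v‖ ^ 2 ≤ (a v v).re)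
    (P : H →L[ℂ] H)
    (P_selfadjoint : ∀ x y : H, inn (P x) y = inn x (P y))
    -- approximation properties of P (mesh size Hm) and of the datum f
    (Hm C₁ C₂ : ℝ)
    (f u uLOD : H)
    (P_approx : ∀ v : H, nl2 (v - P v) ≤ C₁ * Hm * ‖v‖)
    (f_approx : nl2 (f - P f) ≤ C₂ * Hm ^ 2)
    -- u solves the variational problem, uLOD is its Ritz projection in V_LOD
    (hu : ∀ v : H, a u v = inn f v)
    (huLOD_mem : ∀ w : H, P w = 0 → a uLOD w = 0)
    (herr_W : P (u - uLOD) = 0) :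
    nl2 (u - uLOD) ≤ (C₁ ^ 2 * C₂ / α) * Hm ^ 4 := by
  set e := u - uLOD
  have nl2_nonneg (v : H) : 0 ≤ nl2 v := (hnl2 v).symm ▸ Real.sqrt_nonneg _
  have he : nl2 e ≤ C₁ * Hm * ‖e‖ := by simpa only [herr_W, sub_zero] using P_approx e
  have hcoer : α * ‖e‖ ^ 2 ≤ C₂ * Hm ^ 2 * nl2 e := calc
    α * ‖e‖ ^ 2 ≤ (a e e).re := a_coercive e
    _ = (inn (f - P f) e).re := by
      rw [form_self_sub_eq_inner_sub_of_mem_ker a inn a_add_left inn_add_left inn_conj_symm P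
        P_selfadjoint hu huLOD_mem herr_W]
    _ ≤ ‖inn (f - P f) e‖ := Complex.re_le_norm _
    _ ≤ nl2 (f - P f) * nl2 e := by
      rw [hnl2, hnl2]
      exact norm_le_sqrt_re_mul_sqrt_re_of_linear_left inn inn_add_left inn_smul_left
        inn_conj_symm inn_nonneg (f - P f) e
    _ ≤ C₂ * Hm ^ 2 * nl2 e := by gcongr; exact nl2_nonneg e
  calc nl2 e ≤ (C₁ * Hm) ^ 2 * (C₂ * Hm ^ 2) / α :=
        le_sq_mul_div_of_le_mul_of_mul_sq_le hα ((nl2_nonneg _).trans f_approx) (nl2_nonneg e)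
          he hcoer
    _ = C₁ ^ 2 * C₂ / α * Hm ^ 4 := by ring

/-- Fourth-order L²-error estimate for the ideal LOD approximation:
`‖u − u_LOD‖ ≤ (C₁² C₂ / α) · H⁴` (L²-norm). -/
theorem lod_L2_error_estimate
    {H : Type*} [NormedAddCommGroup H] [InnerProductSpace ℂ H] [CompleteSpace H]
    (inn : H → H → ℂ)
    (inn_add_left : ∀ x y z : H, inn (x + y) z = inn x z + inn y z)
    (inn_smul_left : ∀ (c : ℂ) (x y : H), inn (c • x) y = c * inn x y)
    (inn_conj_symm : ∀ x y : H, inn y x = conj (inn x y))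
    (inn_nonneg : ∀ x : H, 0 ≤ (inn x x).re)
    (inn_definite : ∀ x : H, inn x x = 0 → x = 0)
    (nl2 : H → ℝ) (hnl2 : ∀ v : H, nl2 v = Real.sqrt (inn v v).re)
    (CF : ℝ) (hCF : 0 < CF) (hFriedrichs : ∀ v : H, nl2 v ≤ CF * ‖v‖)
    (a : H → H → ℂ)
    (a_add_left : ∀ x y z : H, a (x + y) z = a x z + a y z)
    (a_smul_left : ∀ (c : ℂ) (x y : H), a (c • x) y = c * a x y)
    (a_hermitian : ∀ x y : H, a y x = conj (a x y))
    (Ca : ℝ) (a_bounded : ∀ v w : H, ‖a v w‖ ≤ Ca * ‖v‖ * ‖w‖)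
    (α : ℝ) (hα : 0 < α) (a_coercive : ∀ v : H, α * ‖v‖ ^ 2 ≤ (a v v).re)
    (P : H →L[ℂ] H)
    (P_idem : ∀ x : H, P (P x) = P x)
    (P_finite : FiniteDimensional ℂ (LinearMap.range (P : H →ₗ[ℂ] H)))
    (P_selfadjoint : ∀ x y : H, inn (P x) y = inn x (P y))
    -- approximation properties of P (mesh size Hm) and of the datum f
    (Hm C₁ C₂ : ℝ) (hHm : 0 < Hm) (hC₁ : 0 < C₁) (hC₂ : 0 < C₂)
    (f u uLOD : H)
    (P_approx : ∀ v : H, nl2 (v - P v) ≤ C₁ * Hm * ‖v‖)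
    (f_approx : nl2 (f - P f) ≤ C₂ * Hm ^ 2)
    -- u solves the variational problem, uLOD is its Ritz projection in V_LOD
    (hu : ∀ v : H, a u v = inn f v)
    (huLOD_mem : ∀ w : H, P w = 0 → a uLOD w = 0)
    (huLOD_galerkin : ∀ v : H, (∀ w : H, P w = 0 → a v w = 0) → a uLOD v = a u v)
    (herr_W : P (u - uLOD) = 0) :
    nl2 (u - uLOD) ≤ (C₁ ^ 2 * C₂ / α) * Hm ^ 4 :=
  lod_L2_error_estimate_general inn inn_add_left inn_smul_left inn_conj_symm inn_nonneg nl2 hnl2 a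
    a_add_left α hα a_coercive P P_selfadjoint Hm C₁ C₂ f u uLOD P_approx f_approx hu huLOD_mem
    herr_W
end

section
/- (Sixth-order superconvergence of the mass, abstract form.) Let H be a complex inner product space with inner product ⟨·,·⟩ and norm ‖·‖, and let P : H → H be a linear idempotent self-adjoint with respect to ⟨·,·⟩. Let u⁰, u⁰_LOD ∈ H with u⁰ − u⁰_LOD ∈ ker P. Then ‖u⁰‖² − ‖u⁰_LOD‖² = 2 Re⟨u⁰ − P u⁰, u⁰ − u⁰_LOD⟩ − ‖u⁰ − u⁰_LOD‖²; consequently, if ‖u⁰ − P u⁰‖ ≤ C₁ H² and ‖u⁰ − u⁰_LOD‖ ≤ C₂ H⁴ for constants C₁, C₂, H > 0, then |‖u⁰‖² − ‖u⁰_LOD‖²| ≤ 2 C₁ C₂ H⁶ + C₂² H⁸. -/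
open scoped InnerProductSpace

/-!
Because `P` is self-adjoint and kills `u⁰ - u⁰_LOD`, the inner product `⟨u⁰, u⁰ - u⁰_LOD⟩` equals
`⟨u⁰ - P u⁰, u⁰ - u⁰_LOD⟩`, a product of two small errors. Expanding
`‖u⁰_LOD‖² = ‖u⁰ - (u⁰ - u⁰_LOD)‖²` then shows that the mass defect is this product plus the
square of the LOD error, so the orders `H²` and `H⁴` multiply to `H⁶`.
-/

section

variable {𝕜 E : Type*} [RCLike 𝕜] [NormedAddCommGroup E] [InnerProductSpace 𝕜 E]

theorem LinearMap.IsSymmetric.inner_sub_apply_eq_of_apply_eq_zero {P : E →ₗ[𝕜] E}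
    (hP : P.IsSymmetric) (u : E) {w : E} (hw : P w = 0) :
    ⟪u - P u, w⟫_𝕜 = ⟪u, w⟫_𝕜 := by
  rw [inner_sub_left, hP, hw, inner_zero_right, sub_zero]

theorem norm_sq_sub_norm_sq_eq_two_mul_re_inner_sub (u v : E) :
    ‖u‖ ^ 2 - ‖v‖ ^ 2 = 2 * RCLike.re ⟪u, u - v⟫_𝕜 - ‖u - v‖ ^ 2 := by
  have h := norm_sub_sq (𝕜 := 𝕜) u (u - v)
  rw [sub_sub_cancel] at h
  linarith

theorem abs_two_mul_re_inner_sub_norm_sq_le (x y : E) :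
    |2 * RCLike.re ⟪x, y⟫_𝕜 - ‖y‖ ^ 2| ≤ 2 * (‖x‖ * ‖y‖) + ‖y‖ ^ 2 := by
  have hre : |RCLike.re ⟪x, y⟫_𝕜| ≤ ‖x‖ * ‖y‖ :=
    (RCLike.abs_re_le_norm _).trans (norm_inner_le_norm x y)
  rw [abs_le] at hre ⊢
  constructor <;> linarith [sq_nonneg ‖y‖]

end

theorem mass_superconvergence_general
    {H : Type*} [NormedAddCommGroup H] [InnerProductSpace ℂ H]
    (P : H →ₗ[ℂ] H)
    (P_selfadjoint : ∀ x y : H, ⟪P x, y⟫_ℂ = ⟪x, P y⟫_ℂ)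
    (u0 uLOD : H) (hker : P (u0 - uLOD) = 0)
    (C₁ C₂ Hm : ℝ) :
    (‖u0‖ ^ 2 - ‖uLOD‖ ^ 2
        = 2 * (⟪u0 - P u0, u0 - uLOD⟫_ℂ).re - ‖u0 - uLOD‖ ^ 2) ∧
    (‖u0 - P u0‖ ≤ C₁ * Hm ^ 2 → ‖u0 - uLOD‖ ≤ C₂ * Hm ^ 4 →
      |‖u0‖ ^ 2 - ‖uLOD‖ ^ 2| ≤ 2 * C₁ * C₂ * Hm ^ 6 + C₂ ^ 2 * Hm ^ 8) := by
  have hP : P.IsSymmetric := P_selfadjoint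
  have hid : ‖u0‖ ^ 2 - ‖uLOD‖ ^ 2
      = 2 * (⟪u0 - P u0, u0 - uLOD⟫_ℂ).re - ‖u0 - uLOD‖ ^ 2 := by
    rw [hP.inner_sub_apply_eq_of_apply_eq_zero u0 hker]
    exact norm_sq_sub_norm_sq_eq_two_mul_re_inner_sub (𝕜 := ℂ) u0 uLOD
  refine ⟨hid, fun hproj hLOD => ?_⟩
  calc |‖u0‖ ^ 2 - ‖uLOD‖ ^ 2|
      ≤ 2 * (‖u0 - P u0‖ * ‖u0 - uLOD‖) + ‖u0 - uLOD‖ ^ 2 := by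
        rw [hid]; exact abs_two_mul_re_inner_sub_norm_sq_le (𝕜 := ℂ) _ _
    _ ≤ 2 * (C₁ * Hm ^ 2 * (C₂ * Hm ^ 4)) + (C₂ * Hm ^ 4) ^ 2 := by
        have hproj_bound_nonneg : 0 ≤ C₁ * Hm ^ 2 := (norm_nonneg _).trans hproj
        gcongr
    _ = 2 * C₁ * C₂ * Hm ^ 6 + C₂ ^ 2 * Hm ^ 8 := by ring

/-- Sixth-order superconvergence of the mass, abstract form. -/
theorem mass_superconvergence
    {H : Type*} [NormedAddCommGroup H] [InnerProductSpace ℂ H]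
    (P : H →ₗ[ℂ] H)
    (P_idem : ∀ x : H, P (P x) = P x)
    (P_selfadjoint : ∀ x y : H, ⟪P x, y⟫_ℂ = ⟪x, P y⟫_ℂ)
    (u0 uLOD : H) (hker : P (u0 - uLOD) = 0)
    (C₁ C₂ Hm : ℝ) (hC₁ : 0 < C₁) (hC₂ : 0 < C₂) (hHm : 0 < Hm) :
    (‖u0‖ ^ 2 - ‖uLOD‖ ^ 2
        = 2 * (⟪u0 - P u0, u0 - uLOD⟫_ℂ).re - ‖u0 - uLOD‖ ^ 2) ∧
    (‖u0 - P u0‖ ≤ C₁ * Hm ^ 2 → ‖u0 - uLOD‖ ≤ C₂ * Hm ^ 4 →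
      |‖u0‖ ^ 2 - ‖uLOD‖ ^ 2| ≤ 2 * C₁ * C₂ * Hm ^ 6 + C₂ ^ 2 * Hm ^ 8) :=
  mass_superconvergence_general P P_selfadjoint u0 uLOD hker C₁ C₂ Hm
end

section
/- (Sixth-order superconvergence of the momentum, abstract form.) Let H be a complex inner product space, D : H → H a ℂ-linear map with ⟨Dv, w⟩ = −⟨v, Dw⟩ for all v, w ∈ H, and P : H → H a linear idempotent self-adjoint with respect to ⟨·,·⟩. Let u, u_LOD ∈ H with e := u − u_LOD ∈ ker P. Then |Im⟨u, Du⟩ − Im⟨u_LOD, D u_LOD⟩| ≤ 2 ‖e‖ ‖Du − P(Du)‖ + ‖e‖ ‖De‖; in particular, if ‖e‖ ≤ C₃ H⁴, ‖Du − P(Du)‖ ≤ C₄ H² and ‖De‖ ≤ C₅ H³ for constants C₃, C₄, C₅, H > 0, then |Im⟨u, Du⟩ − Im⟨u_LOD, D u_LOD⟩| ≤ 2 C₃ C₄ H⁶ + C₃ C₅ H⁷. -/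
open scoped InnerProductSpace

/-!
Write `e = u - uLOD`. Expanding bilinearly,
`⟪u, Du⟫ - ⟪uLOD, D uLOD⟫ = ⟪e, Du⟫ + ⟪u, De⟫ - ⟪e, De⟫`, and skew-adjointness of `D` gives
`Im⟪u, De⟫ = Im⟪e, Du⟫`. Since `Pe = 0` and `P` is self-adjoint, `e ⊥ P(Du)`, so `Du` may be
replaced by the projection error `Du - P(Du)`; Cauchy–Schwarz finishes.
-/

section Skew

variable {H : Type*} [NormedAddCommGroup H] [InnerProductSpace ℂ H]
  {D : H →ₗ[ℂ] H} (hD : ∀ v w : H, ⟪D v, w⟫_ℂ = -⟪v, D w⟫_ℂ)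
include hD

theorem im_inner_apply_comm_of_skew (v w : H) : (⟪v, D w⟫_ℂ).im = (⟪w, D v⟫_ℂ).im := by
  rw [← inner_conj_symm, hD, map_neg, Complex.neg_im, Complex.conj_im, neg_neg]

theorem im_inner_apply_sub_im_inner_apply_of_skew (u w : H) :
    (⟪u, D u⟫_ℂ).im - (⟪w, D w⟫_ℂ).im
      = 2 * (⟪u - w, D u⟫_ℂ).im - (⟪u - w, D (u - w)⟫_ℂ).im := by
  have hexpand : ⟪u, D u⟫_ℂ - ⟪w, D w⟫_ℂ
      = ⟪u - w, D u⟫_ℂ + ⟪u, D (u - w)⟫_ℂ - ⟪u - w, D (u - w)⟫_ℂ := by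
    simp only [map_sub, inner_sub_left, inner_sub_right]
    ring
  have him := congrArg Complex.im hexpand
  rw [Complex.sub_im, Complex.sub_im, Complex.add_im, im_inner_apply_comm_of_skew hD u (u - w)] at him
  rw [him]
  ring

end Skew

theorem LinearMap.IsSymmetric.inner_apply_eq_zero_of_apply_eq_zero
    {H : Type*} [NormedAddCommGroup H] [InnerProductSpace ℂ H] {P : H →ₗ[ℂ] H}
    (hP : P.IsSymmetric) {e : H} (he : P e = 0) (x : H) : ⟪e, P x⟫_ℂ = 0 := by
  rw [← hP, he, inner_zero_left]

theorem abs_im_inner_le_norm_mul_norm {H : Type*} [NormedAddCommGroup H]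
    [InnerProductSpace ℂ H] (x y : H) : |(⟪x, y⟫_ℂ).im| ≤ ‖x‖ * ‖y‖ :=
  (Complex.abs_im_le_norm _).trans (norm_inner_le_norm x y)

theorem abs_im_inner_apply_sub_le_of_skew_of_isSymmetric
    {H : Type*} [NormedAddCommGroup H] [InnerProductSpace ℂ H] {D P : H →ₗ[ℂ] H}
    (hD : ∀ v w : H, ⟪D v, w⟫_ℂ = -⟪v, D w⟫_ℂ) (hP : P.IsSymmetric) {u w : H}
    (hker : P (u - w) = 0) :
    |(⟪u, D u⟫_ℂ).im - (⟪w, D w⟫_ℂ).im|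
      ≤ 2 * ‖u - w‖ * ‖D u - P (D u)‖ + ‖u - w‖ * ‖D (u - w)‖ := by
  have hproj : ⟪u - w, D u⟫_ℂ = ⟪u - w, D u - P (D u)⟫_ℂ := by
    rw [inner_sub_right, hP.inner_apply_eq_zero_of_apply_eq_zero hker, sub_zero]
  rw [im_inner_apply_sub_im_inner_apply_of_skew hD, hproj]
  calc |2 * (⟪u - w, D u - P (D u)⟫_ℂ).im - (⟪u - w, D (u - w)⟫_ℂ).im|
      ≤ 2 * |(⟪u - w, D u - P (D u)⟫_ℂ).im| + |(⟪u - w, D (u - w)⟫_ℂ).im| := by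
        rw [← abs_two, ← abs_mul, abs_two]
        exact abs_sub _ _
    _ ≤ 2 * (‖u - w‖ * ‖D u - P (D u)‖) + ‖u - w‖ * ‖D (u - w)‖ := by
        gcongr <;> exact abs_im_inner_le_norm_mul_norm _ _
    _ = 2 * ‖u - w‖ * ‖D u - P (D u)‖ + ‖u - w‖ * ‖D (u - w)‖ := by ring

theorem momentum_superconvergence_general
    {H : Type*} [NormedAddCommGroup H] [InnerProductSpace ℂ H]
    (D : H →ₗ[ℂ] H)
    (D_skew : ∀ v w : H, ⟪D v, w⟫_ℂ = -⟪v, D w⟫_ℂ)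
    (P : H →ₗ[ℂ] H)
    (P_selfadjoint : ∀ x y : H, ⟪P x, y⟫_ℂ = ⟪x, P y⟫_ℂ)
    (u uLOD : H) (hker : P (u - uLOD) = 0)
    (C₃ C₄ C₅ Hm : ℝ) :
    (|(⟪u, D u⟫_ℂ).im - (⟪uLOD, D uLOD⟫_ℂ).im|
        ≤ 2 * ‖u - uLOD‖ * ‖D u - P (D u)‖ + ‖u - uLOD‖ * ‖D (u - uLOD)‖) ∧
    (‖u - uLOD‖ ≤ C₃ * Hm ^ 4 → ‖D u - P (D u)‖ ≤ C₄ * Hm ^ 2 →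
      ‖D (u - uLOD)‖ ≤ C₅ * Hm ^ 3 →
      |(⟪u, D u⟫_ℂ).im - (⟪uLOD, D uLOD⟫_ℂ).im|
        ≤ 2 * C₃ * C₄ * Hm ^ 6 + C₃ * C₅ * Hm ^ 7) := by
  have hbound := abs_im_inner_apply_sub_le_of_skew_of_isSymmetric D_skew P_selfadjoint hker
  refine ⟨hbound, fun he hres hDe => hbound.trans ?_⟩
  have hC₃ : 0 ≤ C₃ * Hm ^ 4 := (norm_nonneg _).trans he
  calc 2 * ‖u - uLOD‖ * ‖D u - P (D u)‖ + ‖u - uLOD‖ * ‖D (u - uLOD)‖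
      = 2 * (‖u - uLOD‖ * ‖D u - P (D u)‖) + ‖u - uLOD‖ * ‖D (u - uLOD)‖ := by ring
    _ ≤ 2 * (C₃ * Hm ^ 4 * (C₄ * Hm ^ 2)) + C₃ * Hm ^ 4 * (C₅ * Hm ^ 3) := by
        gcongr
    _ = 2 * C₃ * C₄ * Hm ^ 6 + C₃ * C₅ * Hm ^ 7 := by ring

/-- Sixth-order superconvergence of the momentum, abstract form. -/
theorem momentum_superconvergence
    {H : Type*} [NormedAddCommGroup H] [InnerProductSpace ℂ H]
    (D : H →ₗ[ℂ] H)
    (D_skew : ∀ v w : H, ⟪D v, w⟫_ℂ = -⟪v, D w⟫_ℂ)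
    (P : H →ₗ[ℂ] H)
    (P_idem : ∀ x : H, P (P x) = P x)
    (P_selfadjoint : ∀ x y : H, ⟪P x, y⟫_ℂ = ⟪x, P y⟫_ℂ)
    (u uLOD : H) (hker : P (u - uLOD) = 0)
    (C₃ C₄ C₅ Hm : ℝ) (hC₃ : 0 < C₃) (hC₄ : 0 < C₄) (hC₅ : 0 < C₅) (hHm : 0 < Hm) :
    (|(⟪u, D u⟫_ℂ).im - (⟪uLOD, D uLOD⟫_ℂ).im|
        ≤ 2 * ‖u - uLOD‖ * ‖D u - P (D u)‖ + ‖u - uLOD‖ * ‖D (u - uLOD)‖) ∧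
    (‖u - uLOD‖ ≤ C₃ * Hm ^ 4 → ‖D u - P (D u)‖ ≤ C₄ * Hm ^ 2 →
      ‖D (u - uLOD)‖ ≤ C₅ * Hm ^ 3 →
      |(⟪u, D u⟫_ℂ).im - (⟪uLOD, D uLOD⟫_ℂ).im|
        ≤ 2 * C₃ * C₄ * Hm ^ 6 + C₃ * C₅ * Hm ^ 7) :=
  momentum_superconvergence_general D D_skew P P_selfadjoint u uLOD hker C₃ C₄ C₅ Hm
end

section
/- (Inverse inequality in the LOD space.) In the abstract LOD setting, assume additionally the finite element inverse estimate ‖Pv‖₁ ≤ C_inv H^{−1} ‖Pv‖ for all v ∈ H, for constants C_inv, H > 0. Then every v ∈ V_LOD satisfies ‖v‖₁ ≤ (1 + C_a/α) · C_inv · H^{−1} · ‖v‖. -/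
/-!
Write `v = P v + w` with `w = v - P v ∈ ker P`. Since `a(v, w) = 0`, coercivity and boundedness give
`α ‖w‖₁ ≤ C_a ‖P v‖₁`, so `‖v‖₁ ≤ (1 + C_a/α) ‖P v‖₁`. The inverse estimate bounds `‖P v‖₁` by
`C_inv H⁻¹ ‖P v‖`, and `‖P v‖ ≤ ‖v‖` because the self-adjoint idempotent `P` splits `v`
orthogonally for `⟨·,·⟩`.
-/

open scoped ComplexConjugate

section Sesquilinear

variable {𝕜 : Type*} [RCLike 𝕜]

theorem apply_zero_left_of_add_left {E : Type*} [AddCommGroup E] {f : E → E → 𝕜}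
    (add_left : ∀ x y z, f (x + y) z = f x z + f y z) (z : E) : f 0 z = 0 := by
  simpa using add_left 0 0 z

theorem re_apply_map_map_le {E F : Type*} [AddCommGroup E] [FunLike F E E]
    [AddMonoidHomClass F E E] {f : E → E → 𝕜}
    (add_left : ∀ x y z, f (x + y) z = f x z + f y z)
    (conj_symm : ∀ x y, f y x = conj (f x y))
    (re_nonneg : ∀ x, 0 ≤ RCLike.re (f x x))
    {P : F} (idem : ∀ x, P (P x) = P x) (selfAdjoint : ∀ x y, f (P x) y = f x (P y)) (v : E) :
    RCLike.re (f (P v) (P v)) ≤ RCLike.re (f v v) := by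
  set w := v - P v
  have hv : v = P v + w := (add_sub_cancel (P v) v).symm
  have hPw : P w = 0 := by rw [map_sub, idem, sub_self]
  have cross : f (P v) w = 0 := by
    rw [selfAdjoint, hPw, conj_symm, apply_zero_left_of_add_left add_left, map_zero]
  have hvw : f v w = f w w := by rw [hv, add_left, cross, zero_add]
  have split : f v v = f (P v) v + f w v := by rw [← add_left, ← hv]
  have hPvv : f (P v) v = f (P v) (P v) := by rw [← selfAdjoint, idem]
  have hwv : f w v = conj (f w w) := by rw [conj_symm, hvw]
  rw [hPvv, hwv] at split
  rw [split, map_add, RCLike.conj_re]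
  linarith [re_nonneg w]

variable {E : Type*} [SeminormedAddCommGroup E] {a : E → E → 𝕜} {C α : ℝ}

theorem nonneg_of_norm_apply_le (bounded : ∀ v w, ‖a v w‖ ≤ C * ‖v‖ * ‖w‖) {v : E}
    (hv : 0 < ‖v‖) : 0 ≤ C := by
  have := (norm_nonneg _).trans (bounded v v)
  rw [mul_assoc] at this
  exact nonneg_of_mul_nonneg_left this (by positivity)

theorem mul_norm_le_of_apply_eq_zero (add_left : ∀ x y z, a (x + y) z = a x z + a y z)
    (bounded : ∀ v w, ‖a v w‖ ≤ C * ‖v‖ * ‖w‖) (coercive : ∀ v, α * ‖v‖ ^ 2 ≤ RCLike.re (a v v))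
    (hC : 0 ≤ C) {u w : E} (h : a u w = 0) : α * ‖w‖ ≤ C * ‖u - w‖ := by
  have hww : a w w = -a (u - w) w := by
    have := add_left (u - w) w w
    rw [sub_add_cancel, h] at this
    linear_combination -this
  have key : α * ‖w‖ ^ 2 ≤ C * ‖u - w‖ * ‖w‖ :=
    calc α * ‖w‖ ^ 2 ≤ RCLike.re (a w w) := coercive w
      _ ≤ ‖a (u - w) w‖ := by
        rw [hww, map_neg]
        exact (neg_le_abs _).trans (RCLike.abs_re_le_norm _)
      _ ≤ C * ‖u - w‖ * ‖w‖ := bounded _ _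
  rcases (norm_nonneg w).eq_or_lt' with hw | hw
  · rw [hw, mul_zero]
    positivity
  · nlinarith

theorem norm_le_of_apply_eq_zero (add_left : ∀ x y z, a (x + y) z = a x z + a y z)
    (bounded : ∀ v w, ‖a v w‖ ≤ C * ‖v‖ * ‖w‖) (hα : 0 < α)
    (coercive : ∀ v, α * ‖v‖ ^ 2 ≤ RCLike.re (a v v)) (hC : 0 ≤ C) {u w : E} (h : a u w = 0) :
    ‖u‖ ≤ (1 + C / α) * ‖u - w‖ := by
  have hw : ‖w‖ ≤ C / α * ‖u - w‖ := by
    rw [div_mul_eq_mul_div, le_div_iff₀ hα, mul_comm]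
    exact mul_norm_le_of_apply_eq_zero add_left bounded coercive hC h
  calc ‖u‖ ≤ ‖u - w‖ + ‖w‖ := norm_le_norm_sub_add u w
    _ ≤ (1 + C / α) * ‖u - w‖ := by linarith

end Sesquilinear

theorem lod_inverse_inequality_general
    {H : Type*} [NormedAddCommGroup H] [InnerProductSpace ℂ H]
    (inn : H → H → ℂ)
    (inn_add_left : ∀ x y z : H, inn (x + y) z = inn x z + inn y z)
    (inn_conj_symm : ∀ x y : H, inn y x = conj (inn x y))
    (inn_nonneg : ∀ x : H, 0 ≤ (inn x x).re)
    (nl2 : H → ℝ) (hnl2 : ∀ v : H, nl2 v = Real.sqrt (inn v v).re)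
    (a : H → H → ℂ)
    (a_add_left : ∀ x y z : H, a (x + y) z = a x z + a y z)
    (Ca : ℝ) (a_bounded : ∀ v w : H, ‖a v w‖ ≤ Ca * ‖v‖ * ‖w‖)
    (α : ℝ) (hα : 0 < α) (a_coercive : ∀ v : H, α * ‖v‖ ^ 2 ≤ (a v v).re)
    (P : H →L[ℂ] H)
    (P_idem : ∀ x : H, P (P x) = P x)
    (P_selfadjoint : ∀ x y : H, inn (P x) y = inn x (P y))
    -- finite element inverse estimate on V_H = range P (mesh size Hm)
    (Cinv Hm : ℝ) (hCinv : 0 < Cinv) (hHm : 0 < Hm)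
    (P_inverse : ∀ v : H, ‖P v‖ ≤ Cinv * Hm⁻¹ * nl2 (P v)) :
    ∀ v : H, (∀ w : H, P w = 0 → a v w = 0) →
      ‖v‖ ≤ (1 + Ca / α) * Cinv * Hm⁻¹ * nl2 v := by
  intro v hv
  obtain rfl | hv0 := eq_or_ne v 0
  · simp [hnl2, apply_zero_left_of_add_left inn_add_left]
  have hCa : 0 ≤ Ca := nonneg_of_norm_apply_le a_bounded (norm_pos_iff.mpr hv0)
  have hstab : ‖v‖ ≤ (1 + Ca / α) * ‖P v‖ := by
    have hker : P (v - P v) = 0 := by rw [map_sub, P_idem, sub_self]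
    simpa using norm_le_of_apply_eq_zero a_add_left a_bounded hα a_coercive hCa (hv _ hker)
  have hl2 : nl2 (P v) ≤ nl2 v := by
    rw [hnl2, hnl2]
    exact Real.sqrt_le_sqrt
      (re_apply_map_map_le inn_add_left inn_conj_symm inn_nonneg P_idem P_selfadjoint v)
  calc ‖v‖ ≤ (1 + Ca / α) * ‖P v‖ := hstab
    _ ≤ (1 + Ca / α) * (Cinv * Hm⁻¹ * nl2 (P v)) := by gcongr; exact P_inverse v
    _ ≤ (1 + Ca / α) * (Cinv * Hm⁻¹ * nl2 v) := by gcongr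
    _ = (1 + Ca / α) * Cinv * Hm⁻¹ * nl2 v := by ring

/-- Inverse inequality in the LOD space: assuming the finite element inverse
estimate `‖Pv‖₁ ≤ C_inv H⁻¹ ‖Pv‖`, every `v ∈ V_LOD` satisfies
`‖v‖₁ ≤ (1 + C_a/α) C_inv H⁻¹ ‖v‖`. -/
theorem lod_inverse_inequality
    {H : Type*} [NormedAddCommGroup H] [InnerProductSpace ℂ H] [CompleteSpace H]
    (inn : H → H → ℂ)
    (inn_add_left : ∀ x y z : H, inn (x + y) z = inn x z + inn y z)
    (inn_smul_left : ∀ (c : ℂ) (x y : H), inn (c • x) y = c * inn x y)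
    (inn_conj_symm : ∀ x y : H, inn y x = conj (inn x y))
    (inn_nonneg : ∀ x : H, 0 ≤ (inn x x).re)
    (inn_definite : ∀ x : H, inn x x = 0 → x = 0)
    (nl2 : H → ℝ) (hnl2 : ∀ v : H, nl2 v = Real.sqrt (inn v v).re)
    (CF : ℝ) (hCF : 0 < CF) (hFriedrichs : ∀ v : H, nl2 v ≤ CF * ‖v‖)
    (a : H → H → ℂ)
    (a_add_left : ∀ x y z : H, a (x + y) z = a x z + a y z)
    (a_smul_left : ∀ (c : ℂ) (x y : H), a (c • x) y = c * a x y)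
    (a_hermitian : ∀ x y : H, a y x = conj (a x y))
    (Ca : ℝ) (a_bounded : ∀ v w : H, ‖a v w‖ ≤ Ca * ‖v‖ * ‖w‖)
    (α : ℝ) (hα : 0 < α) (a_coercive : ∀ v : H, α * ‖v‖ ^ 2 ≤ (a v v).re)
    (P : H →L[ℂ] H)
    (P_idem : ∀ x : H, P (P x) = P x)
    (P_finite : FiniteDimensional ℂ (LinearMap.range (P : H →ₗ[ℂ] H)))
    (P_selfadjoint : ∀ x y : H, inn (P x) y = inn x (P y))
    -- finite element inverse estimate on V_H = range P (mesh size Hm)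
    (Cinv Hm : ℝ) (hCinv : 0 < Cinv) (hHm : 0 < Hm)
    (P_inverse : ∀ v : H, ‖P v‖ ≤ Cinv * Hm⁻¹ * nl2 (P v)) :
    ∀ v : H, (∀ w : H, P w = 0 → a v w = 0) →
      ‖v‖ ≤ (1 + Ca / α) * Cinv * Hm⁻¹ * nl2 v :=
  lod_inverse_inequality_general inn inn_add_left inn_conj_symm inn_nonneg nl2 hnl2 a a_add_left Ca
    a_bounded α hα a_coercive P P_idem P_selfadjoint Cinv Hm hCinv hHm P_inverse
end

section
/- (Truncation error estimate.) Let M > 0 and let u, w ∈ ℂ satisfy |u|² ≤ M. Then |min(|w|², M) − |u|²| ≤ 2 √M · |w − u|. -/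
/-! Since `min (‖w‖ ^ 2) (s ^ 2) = (min ‖w‖ s) ^ 2` and `min · s` is 1-Lipschitz and fixes `‖u‖ ≤ s`,
it suffices to factor `x ^ 2 - a ^ 2 = (x + a) (x - a)` with `x, a ∈ [0, s]`. -/

lemma abs_min_sub_le_abs_sub {α : Type*} [AddCommGroup α] [LinearOrder α] [IsOrderedAddMonoid α]
    {a b s : α} (has : a ≤ s) : |min b s - a| ≤ |b - a| := by
  simpa [min_eq_left has] using abs_min_sub_min_le_max b s a s

lemma abs_sq_sub_sq_le {α : Type*} [CommRing α] [LinearOrder α] [IsStrictOrderedRing α]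
    {x a s : α} (hx : 0 ≤ x) (ha : 0 ≤ a) (hxs : x ≤ s) (has : a ≤ s) :
    |x ^ 2 - a ^ 2| ≤ 2 * s * |x - a| := by
  rw [sq_sub_sq, abs_mul, abs_of_nonneg (add_nonneg hx ha)]
  gcongr
  linarith

lemma min_sq_eq_sq_min {α : Type*} [Semiring α] [LinearOrder α] [IsOrderedRing α] {b s : α}
    (hb : 0 ≤ b) (hs : 0 ≤ s) : min (b ^ 2) (s ^ 2) = min b s ^ 2 :=
  (pow_left_monotoneOn.map_min hb hs).symm

theorem abs_min_sq_norm_sub_sq_norm_le {E : Type*} [SeminormedAddCommGroup E] {u : E} {s : ℝ}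
    (hu : ‖u‖ ≤ s) (w : E) : |min (‖w‖ ^ 2) (s ^ 2) - ‖u‖ ^ 2| ≤ 2 * s * ‖w - u‖ := by
  have hs : 0 ≤ s := (norm_nonneg u).trans hu
  rw [min_sq_eq_sq_min (norm_nonneg w) hs]
  calc |min ‖w‖ s ^ 2 - ‖u‖ ^ 2| ≤ 2 * s * |min ‖w‖ s - ‖u‖| :=
        abs_sq_sub_sq_le (le_min (norm_nonneg w) hs) (norm_nonneg u) (min_le_right _ _) hu
    _ ≤ 2 * s * |‖w‖ - ‖u‖| := by gcongr 2 * s * ?_; exact abs_min_sub_le_abs_sub hu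
    _ ≤ 2 * s * ‖w - u‖ := by gcongr; exact abs_norm_sub_norm_le w u

theorem truncation_error_estimate_general (M : ℝ) (u w : ℂ)
    (hu : ‖u‖ ^ 2 ≤ M) :
    |min (‖w‖ ^ 2) M - ‖u‖ ^ 2|
      ≤ 2 * Real.sqrt M * ‖w - u‖ := by
  have hM : Real.sqrt M ^ 2 = M := Real.sq_sqrt ((sq_nonneg _).trans hu)
  have hu' : ‖u‖ ≤ Real.sqrt M := Real.le_sqrt_of_sq_le hu
  simpa only [hM] using abs_min_sq_norm_sub_sq_norm_le hu' w

/-- Truncation error estimate: if `|u|² ≤ M` then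
`|min(|w|², M) − |u|²| ≤ 2√M |w − u|`. -/
theorem truncation_error_estimate (M : ℝ) (hM : 0 < M) (u w : ℂ)
    (hu : ‖u‖ ^ 2 ≤ M) :
    |min (‖w‖ ^ 2) M - ‖u‖ ^ 2|
      ≤ 2 * Real.sqrt M * ‖w - u‖ :=
  truncation_error_estimate_general M u w hu
end

section
/- (Mass and energy of the benchmark initial value.) Define u₀ : ℝ → ℝ by u₀(x) = ( 8(9e^{−4x} + 16e^{4x}) − 32(4e^{−2x} + 9e^{2x}) ) / ( −128 + 4e^{−6x} + 16e^{6x} + 81e^{−2x} + 64e^{2x} ). Then ∫_ℝ u₀(x)² dx = 12 and ∫_ℝ ( u₀′(x)² − u₀(x)⁴ ) dx = −48. -/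
/-!
Put `t = e^{2x}`. Then `u₀ = N(t) / τ(t)` (`numPoly`, `tauPoly`), where `τ(t)` is `t³` times the
denominator of `u₀`, a polynomial of degree 6 that is positive everywhere, and `d/dx = 2t d/dt`
keeps us among rational functions of `t`. The mass density is the τ-function identity
`u₀² = (log τ(e^{2x}))''`, so the mass is the increase of `(log τ)' = 2tτ'(t)/τ(t)` from `0` at
`-∞` to `2 deg τ = 12` at `+∞`. The energy density is the `x`-derivative of `64 S(t) / (3 τ(t)³)`
for an explicit polynomial `S` (`energyPoly`) of degree `16 < 18`, which goes from
`64 S(0) / (3 τ(0)³) = 48` at `-∞` to `0` at `+∞`. Both densities are integrable because the mass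
density is nonnegative and, as `|u₀| ≤ 8`, so is the energy density plus `64 u₀²`.
-/

open MeasureTheory Polynomial Real Filter Topology

theorem integrable_of_hasDerivAt_of_nonneg {f f' : ℝ → ℝ} {m n : ℝ}
    (hf : ∀ x, HasDerivAt f (f' x) x) (hf' : ∀ x, 0 ≤ f' x)
    (hbot : Tendsto f atBot (𝓝 m)) (htop : Tendsto f atTop (𝓝 n)) : Integrable f' := by
  have hloc : ∀ a b, IntervalIntegrable f' volume a b := fun a b =>
    intervalIntegral.intervalIntegrable_deriv_of_nonneg
      (fun x _ => (hf x).continuousAt.continuousWithinAt) (fun x _ => hf x) (fun x _ => hf' x)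
  refine integrable_of_intervalIntegral_norm_tendsto (n - m) (fun i => (hloc (-i) i).1)
    tendsto_neg_atTop_atBot tendsto_id ?_
  have hint : ∀ i : ℝ, ∫ x in -i..i, ‖f' x‖ = f i - f (-i) := fun i => by
    simp_rw [Real.norm_of_nonneg (hf' _)]
    exact intervalIntegral.integral_eq_sub_of_hasDerivAt (fun x _ => hf x) (hloc _ _)
  simp_rw [hint]
  exact htop.sub (hbot.comp tendsto_neg_atTop_atBot)


section ExpSubstitution

variable {c : ℝ} (P Q : ℝ[X])

theorem hasDerivAt_eval_exp (x : ℝ) :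
    HasDerivAt (fun x => P.eval (exp (c * x)))
      (c * exp (c * x) * (derivative P).eval (exp (c * x))) x :=
  ((P.hasDerivAt _).comp x ((hasDerivAt_id x).const_mul c).exp).congr_deriv (by simp; ring)

theorem hasDerivAt_eval_exp_div {x : ℝ} (hQ : Q.eval (exp (c * x)) ≠ 0) :
    HasDerivAt (fun x => P.eval (exp (c * x)) / Q.eval (exp (c * x)))
      (c * exp (c * x) * ((derivative P).eval (exp (c * x)) * Q.eval (exp (c * x))
        - P.eval (exp (c * x)) * (derivative Q).eval (exp (c * x))) / Q.eval (exp (c * x)) ^ 2) x :=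
  ((hasDerivAt_eval_exp (c := c) P x).div (hasDerivAt_eval_exp Q x) hQ).congr_deriv (by ring)

theorem tendsto_eval_exp_div_atBot (hc : 0 < c) (hQ : Q.eval 0 ≠ 0) :
    Tendsto (fun x => P.eval (exp (c * x)) / Q.eval (exp (c * x))) atBot
      (𝓝 (P.eval 0 / Q.eval 0)) :=
  ((P.continuous.tendsto 0).div (Q.continuous.tendsto 0) hQ).comp
    (tendsto_exp_atBot.comp (tendsto_id.const_mul_atBot hc))

theorem tendsto_eval_exp_div_atTop (hc : 0 < c) (h : P.degree = Q.degree) :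
    Tendsto (fun x => P.eval (exp (c * x)) / Q.eval (exp (c * x))) atTop
      (𝓝 (P.leadingCoeff / Q.leadingCoeff)) :=
  (div_tendsto_atTop_leadingCoeff_div_of_degree_eq P Q h).comp
    (tendsto_exp_atTop.comp (tendsto_id.const_mul_atTop hc))

theorem tendsto_eval_exp_div_atTop_zero (hc : 0 < c) (h : P.degree < Q.degree) :
    Tendsto (fun x => P.eval (exp (c * x)) / Q.eval (exp (c * x))) atTop (𝓝 0) :=
  (div_tendsto_atTop_zero_of_degree_lt P Q h).comp
    (tendsto_exp_atTop.comp (tendsto_id.const_mul_atTop hc))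

end ExpSubstitution

namespace BenchmarkSoliton

noncomputable section

def tauPoly : ℝ[X] := 16 * X ^ 6 + 64 * X ^ 4 - 128 * X ^ 3 + 81 * X ^ 2 + 4

def numPoly : ℝ[X] := 128 * X ^ 5 - 288 * X ^ 4 - 128 * X ^ 2 + 72 * X

/-- For `S` this polynomial, `R = 64 S / 3` is the solution of degree `< 18` (unique, the kernel
being spanned by `τ³`) of `2t (R'τ - 3Rτ') = (2t (N'τ - Nτ'))² - N⁴`, i.e. `R(t) / τ(t)³` is an
antiderivative of the energy density. -/
def energyPoly : ℝ[X] := -12288 * X ^ 16 + 73728 * X ^ 15 - 26112 * X ^ 14 - 688128 * X ^ 13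
  + 1888000 * X ^ 12 - 3274752 * X ^ 11 + 4448448 * X ^ 10 - 6893568 * X ^ 9 + 7740528 * X ^ 8
  - 4359840 * X ^ 7 + 1331298 * X ^ 6 - 342144 * X ^ 5 + 150837 * X ^ 4 - 18432 * X ^ 3
  + 9720 * X ^ 2 + 144

def u (x : ℝ) : ℝ := numPoly.eval (exp (2 * x)) / tauPoly.eval (exp (2 * x))

def logDerivTau (x : ℝ) : ℝ :=
  (2 * X * derivative tauPoly).eval (exp (2 * x)) / tauPoly.eval (exp (2 * x))

def energyFlux (x : ℝ) : ℝ :=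
  (64 * energyPoly).eval (exp (2 * x)) / (3 * tauPoly ^ 3).eval (exp (2 * x))

theorem tauPoly_eval_pos (t : ℝ) : 0 < tauPoly.eval t := by
  have h : tauPoly.eval t = 16 * t ^ 6 + 64 * (t * (t - 1)) ^ 2 + 17 * t ^ 2 + 4 := by
    simp only [tauPoly, eval_add, eval_sub, eval_mul, eval_pow, eval_X, eval_ofNat]
    ring
  rw [h]
  positivity

theorem abs_numPoly_eval_le (t : ℝ) : |numPoly.eval t| ≤ 8 * tauPoly.eval t := by
  simp only [numPoly, tauPoly, eval_add, eval_sub, eval_mul, eval_pow, eval_X, eval_ofNat]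
  rw [abs_le]
  constructor <;> nlinarith [sq_nonneg (t ^ 3 - t ^ 2), sq_nonneg (t ^ 2 - t), sq_nonneg (t - 1),
    sq_nonneg (t ^ 3 - t), sq_nonneg (t ^ 2 - 1)]

theorem abs_u_le (x : ℝ) : |u x| ≤ 8 := by
  have hτ := tauPoly_eval_pos (exp (2 * x))
  rw [u, abs_div, abs_of_pos hτ, div_le_iff₀ hτ]
  exact abs_numPoly_eval_le _

theorem u_eq (x : ℝ) : u x =
    (8 * (9 * exp (-4 * x) + 16 * exp (4 * x)) - 32 * (4 * exp (-2 * x) + 9 * exp (2 * x)))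
      / (-128 + 4 * exp (-6 * x) + 16 * exp (6 * x) + 81 * exp (-2 * x) + 64 * exp (2 * x)) := by
  have hpow (n : ℕ) : exp (n * (2 * x)) = exp (2 * x) ^ n := exp_nat_mul _ n
  have hinv (n : ℕ) : exp (-(n * (2 * x))) = (exp (2 * x) ^ n)⁻¹ := by rw [exp_neg, hpow]
  have h2 := hpow 2
  have h3 := hpow 3
  have hm1 := hinv 1
  have hm2 := hinv 2
  have hm3 := hinv 3
  push_cast at h2 h3 hm1 hm2 hm3
  rw [show -4 * x = -(2 * (2 * x)) by ring, show 4 * x = 2 * (2 * x) by ring,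
    show -2 * x = -(1 * (2 * x)) by ring, show -6 * x = -(3 * (2 * x)) by ring,
    show 6 * x = 3 * (2 * x) by ring, h2, h3, hm1, hm2, hm3]
  have ht := (exp_pos (2 * x)).ne'
  have hτ := (tauPoly_eval_pos (exp (2 * x))).ne'
  simp only [u, numPoly, tauPoly, eval_add, eval_sub, eval_mul, eval_pow, eval_X,
    eval_ofNat] at hτ ⊢
  field_simp
  ring

theorem hasDerivAt_u (x : ℝ) :
    HasDerivAt u (2 * exp (2 * x) * ((derivative numPoly).eval (exp (2 * x))
        * tauPoly.eval (exp (2 * x)) - numPoly.eval (exp (2 * x))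
        * (derivative tauPoly).eval (exp (2 * x))) / tauPoly.eval (exp (2 * x)) ^ 2) x :=
  hasDerivAt_eval_exp_div numPoly tauPoly (tauPoly_eval_pos _).ne'

theorem logDerivTau_identity :
    2 * X * (derivative (2 * X * derivative tauPoly) * tauPoly
      - 2 * X * derivative tauPoly * derivative tauPoly) = numPoly ^ 2 := by
  simp [tauPoly, numPoly, C_ofNat]
  ring

theorem energyFlux_identity :
    2 * X * (64 * (derivative energyPoly * tauPoly - 3 * energyPoly * derivative tauPoly)) =
      3 * ((2 * X * (derivative numPoly * tauPoly - numPoly * derivative tauPoly)) ^ 2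
        - numPoly ^ 4) := by
  simp [tauPoly, numPoly, energyPoly, C_ofNat]
  ring

theorem hasDerivAt_logDerivTau (x : ℝ) : HasDerivAt logDerivTau (u x ^ 2) x := by
  refine (hasDerivAt_eval_exp_div _ _ (tauPoly_eval_pos _).ne').congr_deriv ?_
  have h := congrArg (eval (exp (2 * x))) logDerivTau_identity
  simp only [eval_sub, eval_mul, eval_pow, eval_X, eval_ofNat] at h ⊢
  rw [u, div_pow, ← h]

theorem hasDerivAt_energyFlux (x : ℝ) :
    HasDerivAt energyFlux (deriv u x ^ 2 - u x ^ 4) x := by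
  have hτ := (tauPoly_eval_pos (exp (2 * x))).ne'
  refine (hasDerivAt_eval_exp_div _ _ (by simpa using hτ)).congr_deriv ?_
  have h := congrArg (eval (exp (2 * x))) energyFlux_identity
  rw [(hasDerivAt_u x).deriv, u]
  simp only [derivative_mul, derivative_pow, derivative_ofNat, eval_sub, eval_mul, eval_pow,
    eval_X, eval_ofNat, eval_C, zero_mul, zero_add] at h ⊢
  field_simp
  norm_num
  linear_combination (tauPoly.eval (exp (2 * x))) ^ 2 * h

theorem two_mul_X_mul_derivative_tauPoly :
    2 * X * derivative tauPoly = 192 * X ^ 6 + 512 * X ^ 4 - 768 * X ^ 3 + 324 * X ^ 2 := by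
  simp [tauPoly, C_ofNat]
  ring

theorem tendsto_logDerivTau_atBot : Tendsto logDerivTau atBot (𝓝 0) := by
  have h := tendsto_eval_exp_div_atBot (c := 2) (2 * X * derivative tauPoly) tauPoly two_pos
    (by norm_num [tauPoly])
  rwa [eval_mul, eval_mul, eval_X, mul_zero, zero_mul, zero_div] at h

theorem tendsto_logDerivTau_atTop : Tendsto logDerivTau atTop (𝓝 12) := by
  have hτ : tauPoly.degree = 6 := by unfold tauPoly; compute_degree!
  have hL : (2 * X * derivative tauPoly).degree = 6 := by
    rw [two_mul_X_mul_derivative_tauPoly]; compute_degree!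
  have hlc : (2 * X * derivative tauPoly).leadingCoeff / tauPoly.leadingCoeff = 12 := by
    rw [leadingCoeff, leadingCoeff, natDegree_eq_of_degree_eq_some hτ,
      natDegree_eq_of_degree_eq_some hL, two_mul_X_mul_derivative_tauPoly]
    norm_num [tauPoly, coeff_X_pow]
  have h := tendsto_eval_exp_div_atTop (c := 2) _ _ two_pos (hL.trans hτ.symm)
  rwa [hlc] at h

theorem tendsto_energyFlux_atBot : Tendsto energyFlux atBot (𝓝 48) := by
  have h := tendsto_eval_exp_div_atBot (c := 2) (64 * energyPoly) (3 * tauPoly ^ 3)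
    two_pos (by norm_num [tauPoly])
  have h48 : (64 * energyPoly).eval 0 / (3 * tauPoly ^ 3).eval 0 = 48 := by
    norm_num [tauPoly, energyPoly]
  rwa [h48] at h

theorem tendsto_energyFlux_atTop : Tendsto energyFlux atTop (𝓝 0) := by
  have hS : (64 * energyPoly).degree ≤ 16 := by unfold energyPoly; compute_degree
  have hτ : (3 * tauPoly ^ 3).degree = 18 := by unfold tauPoly; compute_degree!
  exact tendsto_eval_exp_div_atTop_zero _ _ two_pos (by rw [hτ]; exact hS.trans_lt (by norm_num))

theorem integrable_u_sq : Integrable fun x => u x ^ 2 :=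
  integrable_of_hasDerivAt_of_nonneg hasDerivAt_logDerivTau (fun _ => sq_nonneg _)
    tendsto_logDerivTau_atBot tendsto_logDerivTau_atTop

theorem integral_u_sq : ∫ x, u x ^ 2 = 12 := by
  rw [integral_of_hasDerivAt_of_tendsto hasDerivAt_logDerivTau integrable_u_sq
    tendsto_logDerivTau_atBot tendsto_logDerivTau_atTop, sub_zero]

theorem energyDensity_add_nonneg (x : ℝ) : 0 ≤ deriv u x ^ 2 - u x ^ 4 + 64 * u x ^ 2 := by
  have hu : u x ^ 2 ≤ 8 ^ 2 := sq_le_sq' (abs_le.1 (abs_u_le x)).1 (abs_le.1 (abs_u_le x)).2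
  nlinarith [sq_nonneg (deriv u x), mul_nonneg (sq_nonneg (u x)) (sub_nonneg.2 hu)]

theorem integrable_energyDensity : Integrable fun x => deriv u x ^ 2 - u x ^ 4 := by
  have h := integrable_of_hasDerivAt_of_nonneg
    (fun x => (hasDerivAt_energyFlux x).add ((hasDerivAt_logDerivTau x).const_mul 64))
    energyDensity_add_nonneg
    (tendsto_energyFlux_atBot.add (tendsto_logDerivTau_atBot.const_mul 64))
    (tendsto_energyFlux_atTop.add (tendsto_logDerivTau_atTop.const_mul 64))
  refine (h.sub (integrable_u_sq.const_mul 64)).congr (Eventually.of_forall fun x => ?_)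
  simp only [Pi.sub_apply]
  ring

theorem integral_energyDensity : ∫ x, (deriv u x ^ 2 - u x ^ 4) = -48 := by
  rw [integral_of_hasDerivAt_of_tendsto hasDerivAt_energyFlux integrable_energyDensity
    tendsto_energyFlux_atBot tendsto_energyFlux_atTop]
  norm_num

end

end BenchmarkSoliton

open BenchmarkSoliton in
/-- Mass and energy of the benchmark initial value `u₀` of the stationary
two-soliton solution: `∫ u₀² = 12` and `∫ (u₀′² − u₀⁴) = −48`. -/
theorem benchmark_initial_mass_energy (u₀ : ℝ → ℝ)
    (h : ∀ x : ℝ, u₀ x =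
      (8 * (9 * Real.exp (-4 * x) + 16 * Real.exp (4 * x))
        - 32 * (4 * Real.exp (-2 * x) + 9 * Real.exp (2 * x)))
      / (-128 + 4 * Real.exp (-6 * x) + 16 * Real.exp (6 * x)
          + 81 * Real.exp (-2 * x) + 64 * Real.exp (2 * x))) :
    (∫ x : ℝ, u₀ x ^ 2) = 12 ∧
    (∫ x : ℝ, (deriv u₀ x ^ 2 - u₀ x ^ 4)) = -48 := by
  obtain rfl : u₀ = u := funext fun x => (h x).trans (u_eq x).symm
  exact ⟨integral_u_sq, integral_energyDensity⟩
end
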